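/- A finitely generated group Γ, equipped with the word metric associated with a finite generating set S, has exponential growth (i.e., limsup_{l→∞} (1/l) log |B(e,l)| > 0, where B(e,l) is the ball of radius l around the identity in the word metric) if and only if its coarse entropy is infinite: h_∞(Γ, d_S) = ∞. -/

import Mathlib

open Filter Set Metric
open scoped ENNReal

noncomputable section

/-- `p` represents a `δ`-pseudoorbit of `f` of length `n` starting at `x₀`:
`(p 0, p 1, …, p n)` with `p 0 = x₀` and `dist (f (p i)) (p (i+1)) ≤ δ` for `i < n`.
(Only the values `p 0, …, p n` are relevant.) -/
def IsPseudoOrbit {X : Type*} [MetricSpace X] (f : X → X) (δ : ℝ) (n : ℕ) (x₀ : X)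
    (p : ℕ → X) : Prop :=
  p 0 = x₀ ∧ ∀ i < n, dist (f (p i)) (p (i + 1)) ≤ δ

/-- The distance between two pseudoorbits of length `n`:
the maximum of `dist (p i) (q i)` over `0 ≤ i ≤ n`. -/
def orbitDist {X : Type*} [MetricSpace X] (n : ℕ) (p q : ℕ → X) : ℝ :=
  (Finset.range (n + 1)).sup' (by simp) fun i => dist (p i) (q i)

/-- A family `S` of pseudoorbits of length `n` is `R`-separated if any two distinct
members are at pseudoorbit distance at least `R`. -/
def IsSepFamily {X : Type*} [MetricSpace X] (n : ℕ) (R : ℝ) (S : Set (ℕ → X)) : Prop :=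
  ∀ p ∈ S, ∀ q ∈ S, p ≠ q → R ≤ orbitDist n p q

/-- `sepCard f n R δ x₀` is `s(f,n,R,δ,x₀)`: the supremum of cardinalities of
`R`-separated sets of `δ`-pseudoorbits of `f` of length `n` starting at `x₀`. -/
def sepCard {X : Type*} [MetricSpace X] (f : X → X) (n : ℕ) (R δ : ℝ) (x₀ : X) : ℝ≥0∞ :=
  ⨆ (S : Set (ℕ → X)) (_ : ∀ p ∈ S, IsPseudoOrbit f δ n x₀ p) (_ : IsSepFamily n R S),
    (S.encard : ℝ≥0∞)

/-- Extended logarithm `[0,∞] → [0,∞]` (negative values are truncated to `0`). -/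
def elog (x : ℝ≥0∞) : ℝ≥0∞ :=
  if x = ⊤ then ⊤ else ENNReal.ofReal (Real.log x.toReal)

/-- The coarse entropy of `f : X → X` computed at the basepoint `x₀`:
`h_∞(f) = lim_{δ→∞} lim_{R→∞} limsup_{n→∞} (1/n) log s(f,n,R,δ,x₀)`.
Since `s` is nondecreasing in `δ` and nonincreasing in `R`, the limits in `δ` and `R`
are the supremum over `δ > 0` and the infimum over `R > 0`, respectively. -/
def coarseEntropyAt {X : Type*} [MetricSpace X] (f : X → X) (x₀ : X) : ℝ≥0∞ :=
  ⨆ (δ : ℝ) (_ : 0 < δ), ⨅ (R : ℝ) (_ : 0 < R),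
    Filter.atTop.limsup fun n : ℕ => elog (sepCard f n R δ x₀) / (n : ℝ≥0∞)

end

/-- The word metric associated with a generating set `S`: `wordDist S g h` is the
minimal `n` such that `g⁻¹ * h` is a product of `n` elements of `S ∪ S⁻¹`
(equivalently, the path metric of the Cayley graph `Cay(Γ,S)`). -/
noncomputable def wordDist {Γ : Type*} [Group Γ] (S : Set Γ) (g h : Γ) : ℕ :=
  sInf {n : ℕ | ∃ l : List Γ, l.length = n ∧ (∀ x ∈ l, x ∈ S ∨ x⁻¹ ∈ S) ∧
    g⁻¹ * h = l.prod}

/-!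
Balls of a word metric are submultiplicative, `|B(m+n)| ≤ |B(m)| |B(n)|`, so by Fekete's lemma
`log |B(n)| / n` converges to some `c ≥ 0`, and the growth condition says `c > 0`.

If `c > 0`: every point of `B(nk)` is the endpoint of a `k`-pseudo-orbit of length `n` starting
at `1`, and a maximal `R`-separated subset of `B(nk)` has at least `|B(nk)| / |B(R)|` points, so
`s(n, R, k, 1) ≥ |B(nk)| / |B(R)|` and the entropy is at least `k c` for every `k`.

If `c = 0`: for `R > 2kδ`, an `R`-separated family of `δ`-pseudo-orbits is determined by the
increments `p(jk)⁻¹ p((j+1)k) ∈ B(kδ)`, so `s(n, R, δ, 1) ≤ |B(kδ)| ^ (n / k)` and the entropy at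
scale `δ` is at most `log |B(kδ)| / k`, which tends to `0` as `k → ∞`.
-/

open scoped Pointwise Topology

theorem elog_ofReal {y : ℝ} (hy : 0 ≤ y) :
    elog (ENNReal.ofReal y) = ENNReal.ofReal (Real.log y) := by
  rw [elog, if_neg ENNReal.ofReal_ne_top, ENNReal.toReal_ofReal hy]

theorem elog_mono : Monotone elog := by
  intro x y hxy
  unfold elog
  split_ifs with hx hy hy
  · exact le_rfl
  · exact absurd (top_le_iff.mp (hx ▸ hxy)) hy
  · exact le_top
  · rcases (ENNReal.toReal_nonneg (a := x)).eq_or_lt with h0 | h0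
    · simp [← h0]
    · exact ENNReal.ofReal_le_ofReal (Real.log_le_log h0 (ENNReal.toReal_mono hy hxy))

theorem ENNReal.ofReal_div_natCast {n : ℕ} (hn : n ≠ 0) (a : ℝ) :
    ENNReal.ofReal (a / n) = ENNReal.ofReal a / n := by
  rw [ENNReal.ofReal_div_of_pos (by positivity), ENNReal.ofReal_natCast]

section PseudoOrbit

variable {X : Type*} [MetricSpace X] {f : X → X} {δ R : ℝ} {n : ℕ} {x₀ : X} {p q : ℕ → X}

theorem dist_le_orbitDist {i : ℕ} (hi : i ≤ n) (p q : ℕ → X) :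
    dist (p i) (q i) ≤ orbitDist n p q :=
  Finset.le_sup' (fun i => dist (p i) (q i)) (Finset.mem_range.mpr (Nat.lt_succ_of_le hi))

theorem orbitDist_le {M : ℝ} (h : ∀ i ≤ n, dist (p i) (q i) ≤ M) : orbitDist n p q ≤ M :=
  Finset.sup'_le _ _ fun i hi => h i (Nat.lt_succ_iff.mp (Finset.mem_range.mp hi))

theorem IsPseudoOrbit.mono {δ' : ℝ} (hp : IsPseudoOrbit f δ n x₀ p) (hδ : δ ≤ δ') :
    IsPseudoOrbit f δ' n x₀ p :=
  ⟨hp.1, fun i hi => (hp.2 i hi).trans hδ⟩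

theorem sepCard_mono {δ' : ℝ} (hδ : δ ≤ δ') : sepCard f n R δ x₀ ≤ sepCard f n R δ' x₀ :=
  iSup_mono fun _ => iSup_mono' fun hF => ⟨fun p hp => (hF p hp).mono hδ, le_rfl⟩

theorem encard_le_sepCard {F : Set (ℕ → X)} (hF : ∀ p ∈ F, IsPseudoOrbit f δ n x₀ p)
    (hsep : IsSepFamily n R F) : (F.encard : ℝ≥0∞) ≤ sepCard f n R δ x₀ :=
  le_iSup₂_of_le F hF (le_iSup_of_le hsep le_rfl)

theorem IsPseudoOrbit.dist_le_mul (hp : IsPseudoOrbit id δ n x₀ p) {a j : ℕ} (h : a + j ≤ n) :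
    dist (p a) (p (a + j)) ≤ j * δ := by
  induction j with
  | zero => simp
  | succ j ih =>
    calc dist (p a) (p (a + (j + 1)))
        ≤ dist (p a) (p (a + j)) + dist (p (a + j)) (p (a + j + 1)) := dist_triangle _ _ _
      _ ≤ j * δ + δ := add_le_add (ih (by omega)) (hp.2 (a + j) (by omega))
      _ = (j + 1 : ℕ) * δ := by push_cast; ring

theorem IsPseudoOrbit.orbitDist_le_of_eq_mul (hp : IsPseudoOrbit id δ n x₀ p)
    (hq : IsPseudoOrbit id δ n x₀ q) (hδ : 0 ≤ δ) {k : ℕ} (hk : 0 < k)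
    (h : ∀ j ≤ n / k, p (j * k) = q (j * k)) : orbitDist n p q ≤ 2 * (k * δ) := by
  refine orbitDist_le fun i hi => ?_
  have hik : i / k * k + i % k = i := Nat.div_add_mod' i k
  have hclose : ∀ r : ℕ → X, IsPseudoOrbit id δ n x₀ r →
      dist (r (i / k * k)) (r i) ≤ k * δ := fun r hr => by
    have := hr.dist_le_mul (a := i / k * k) (j := i % k) (by omega)
    rw [hik] at this
    exact this.trans (by gcongr; exact_mod_cast (Nat.mod_lt i hk).le)
  calc dist (p i) (q i) ≤ dist (p (i / k * k)) (p i) + dist (q (i / k * k)) (q i) := by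
        rw [h _ (Nat.div_le_div_right hi)]
        exact dist_triangle_left _ _ _
    _ ≤ k * δ + k * δ := add_le_add (hclose p hp) (hclose q hq)
    _ = 2 * (k * δ) := by ring

theorem exists_pseudoOrbit_of_dist_le
    (hsplit : ∀ (g : X) (a b : ℕ), dist x₀ g ≤ a + b → ∃ x, dist x₀ x ≤ a ∧ dist x g ≤ b)
    (k n : ℕ) {g : X} (hg : dist x₀ g ≤ (n * k : ℕ)) :
    ∃ p : ℕ → X, IsPseudoOrbit id k n x₀ p ∧ p n = g := by
  induction n generalizing g with
  | zero =>
    refine ⟨fun _ => x₀, ⟨rfl, fun i hi => absurd hi (Nat.not_lt_zero i)⟩, ?_⟩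
    exact dist_le_zero.mp (by simpa using hg)
  | succ n ih =>
    obtain ⟨x, hx, hxg⟩ := hsplit g (n * k) k (by push_cast at hg ⊢; linarith)
    obtain ⟨p, ⟨hp₀, hp⟩, hpn⟩ := ih (g := x) (by exact_mod_cast hx)
    refine ⟨fun i => if i ≤ n then p i else g, ⟨by simpa using hp₀, fun i hi => ?_⟩, by simp⟩
    rcases (Nat.lt_succ_iff.mp hi).lt_or_eq with hi | rfl
    · simpa [hi.le, Nat.succ_le_of_lt hi] using hp i hi
    · simpa [hpn] using hxg

end PseudoOrbit

theorem Set.ncard_le_ncard_mul_ncard {Γ : Type*} [Group Γ] {u s t : Set Γ} (h : u ⊆ s * t)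
    (hs : s.Finite) (ht : t.Finite) : u.ncard ≤ s.ncard * t.ncard :=
  calc u.ncard ≤ (s * t).ncard := Set.ncard_le_ncard h (hs.mul ht)
    _ ≤ s.ncard * t.ncard := Set.natCard_mul_le

noncomputable def ballCard (Γ : Type*) [One Γ] [PseudoMetricSpace Γ] (r : ℝ) : ℕ :=
  (closedBall (1 : Γ) r).ncard

section BallCard

variable {Γ : Type*} [One Γ] [MetricSpace Γ]

theorem encard_closedBall_one {r : ℝ} (hfin : (closedBall (1 : Γ) r).Finite) :
    (closedBall (1 : Γ) r).encard = ballCard Γ r :=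
  hfin.cast_ncard_eq.symm

theorem ballCard_pos {r : ℝ} (hfin : (closedBall (1 : Γ) r).Finite) (hr : 0 ≤ r) :
    0 < ballCard Γ r :=
  (Set.ncard_pos hfin).mpr ⟨1, mem_closedBall_self hr⟩

theorem limsup_elog_encard_closedBall_div {c : ℝ}
    (hfin : ∀ r : ℝ, (closedBall (1 : Γ) r).Finite)
    (hc : Tendsto (fun n : ℕ => Real.log (ballCard Γ n) / n) atTop (𝓝 c)) :
    atTop.limsup (fun l : ℕ => elog ((closedBall (1 : Γ) l).encard : ℝ≥0∞) / l) =
      ENNReal.ofReal c := by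
  refine (((ENNReal.continuous_ofReal.tendsto c).comp hc).congr' ?_).limsup_eq
  filter_upwards [eventually_ne_atTop 0] with l hl
  rw [Function.comp_apply, ENNReal.ofReal_div_natCast hl, ← elog_ofReal (by positivity),
    ENNReal.ofReal_natCast, encard_closedBall_one (hfin l)]
  rfl

end BallCard

section InvariantMetric

variable {Γ : Type*} [Group Γ] [MetricSpace Γ] [IsIsometricSMul Γ Γ]

theorem dist_one_inv_mul (x y : Γ) : dist 1 (x⁻¹ * y) = dist x y := by
  simpa using dist_mul_left x⁻¹ x y

theorem mem_mul_closedBall_one {T : Set Γ} {t g : Γ} {r : ℝ} (ht : t ∈ T) (h : dist t g ≤ r) :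
    g ∈ T * closedBall 1 r :=
  ⟨t, ht, t⁻¹ * g, by rwa [mem_closedBall, dist_comm, dist_one_inv_mul], mul_inv_cancel_left t g⟩

theorem closedBall_add_subset
    (hsplit : ∀ (g : Γ) (a b : ℕ), dist 1 g ≤ a + b → ∃ x, dist 1 x ≤ a ∧ dist x g ≤ b)
    (a b : ℕ) : closedBall (1 : Γ) (a + b) ⊆ closedBall 1 a * closedBall 1 b := by
  intro g hg
  obtain ⟨x, hx, hxg⟩ := hsplit g a b (by rwa [mem_closedBall, dist_comm] at hg)
  exact mem_mul_closedBall_one (by rwa [mem_closedBall, dist_comm]) hxg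

theorem finite_closedBall_one_of_split (h₁ : (closedBall (1 : Γ) 1).Finite)
    (hsplit : ∀ (g : Γ) (a b : ℕ), dist 1 g ≤ a + b → ∃ x, dist 1 x ≤ a ∧ dist x g ≤ b)
    (r : ℝ) : (closedBall (1 : Γ) r).Finite := by
  have hnat : ∀ n : ℕ, (closedBall (1 : Γ) n).Finite := by
    intro n
    induction n with
    | zero => exact h₁.subset (closedBall_subset_closedBall (by norm_num))
    | succ n ih =>
      exact (ih.mul h₁).subset (by exact_mod_cast closedBall_add_subset hsplit n 1)
  exact (hnat ⌈r⌉₊).subset (closedBall_subset_closedBall (Nat.le_ceil r))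

theorem ballCard_add_le (hfin : ∀ r : ℝ, (closedBall (1 : Γ) r).Finite)
    (hsplit : ∀ (g : Γ) (a b : ℕ), dist 1 g ≤ a + b → ∃ x, dist 1 x ≤ a ∧ dist x g ≤ b)
    (a b : ℕ) : ballCard Γ (a + b) ≤ ballCard Γ a * ballCard Γ b :=
  Set.ncard_le_ncard_mul_ncard (closedBall_add_subset hsplit a b) (hfin a) (hfin b)

theorem exists_tendsto_log_ballCard_div (hfin : ∀ r : ℝ, (closedBall (1 : Γ) r).Finite)
    (hsplit : ∀ (g : Γ) (a b : ℕ), dist 1 g ≤ a + b → ∃ x, dist 1 x ≤ a ∧ dist x g ≤ b) :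
    ∃ c, 0 ≤ c ∧
      Tendsto (fun n : ℕ => Real.log (ballCard Γ n) / n) atTop (𝓝 c) := by
  have hpos (n : ℕ) : (0 : ℝ) < ballCard Γ n := by
    exact_mod_cast ballCard_pos (hfin n) n.cast_nonneg
  have hnonneg (n : ℕ) : 0 ≤ Real.log (ballCard Γ n) / n :=
    div_nonneg (Real.log_nonneg (by exact_mod_cast hpos n)) n.cast_nonneg
  have hsub : Subadditive fun n : ℕ => Real.log (ballCard Γ n) := fun a b => by
    rw [← Real.log_mul (hpos a).ne' (hpos b).ne']
    exact Real.log_le_log (hpos _) (by exact_mod_cast ballCard_add_le hfin hsplit a b)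
  have hlim := hsub.tendsto_lim ⟨0, by rintro _ ⟨n, rfl⟩; exact hnonneg n⟩
  exact ⟨_, ge_of_tendsto' hlim hnonneg, hlim⟩

theorem ballCard_le_sepCard_mul (hfin : ∀ r : ℝ, (closedBall (1 : Γ) r).Finite)
    (hsplit : ∀ (g : Γ) (a b : ℕ), dist 1 g ≤ a + b → ∃ x, dist 1 x ≤ a ∧ dist x g ≤ b)
    (k n : ℕ) {R : ℝ} (hR : 0 < R) :
    (ballCard Γ (n * k : ℕ) : ℝ≥0∞) ≤ sepCard (id : Γ → Γ) n R k 1 * ballCard Γ R := by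
  set B := closedBall (1 : Γ) (n * k : ℕ)
  set T := maximalSeparatedSet R.toNNReal B
  have hTB : T ⊆ B := maximalSeparatedSet_subset
  have hTfin : T.Finite := (hfin _).subset hTB
  have hcover : B ⊆ T * closedBall 1 R := by
    intro g hg
    obtain ⟨t, ht, hgt⟩ := isCover_maximalSeparatedSet
      ((packingNumber_le_encard_self B).trans_lt (hfin _).encard_lt_top).ne hg
    exact mem_mul_closedBall_one ht (by rw [dist_comm]; exact (edist_le_ofReal hR.le).mp hgt)
  choose! path hpath hpath_end using fun g (hg : g ∈ T) =>
    exists_pseudoOrbit_of_dist_le hsplit k n (g := g) (mem_closedBall'.mp (hTB hg))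
  have hinj : InjOn path T := fun g hg g' hg' h => by
    rw [← hpath_end g hg, ← hpath_end g' hg', h]
  have hsep : IsSepFamily n R (path '' T) := by
    rintro _ ⟨g, hg, rfl⟩ _ ⟨g', hg', rfl⟩ hne
    have hgg' : ENNReal.ofReal R < edist g g' :=
      isSeparated_maximalSeparatedSet hg hg' fun h => hne (by rw [h])
    calc R ≤ dist g g' := by
          rw [edist_dist] at hgg'
          exact (ENNReal.ofReal_lt_ofReal_iff'.mp hgg').1.le
      _ = dist (path g n) (path g' n) := by rw [hpath_end g hg, hpath_end g' hg']
      _ ≤ orbitDist n (path g) (path g') := dist_le_orbitDist le_rfl _ _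
  calc (ballCard Γ (n * k : ℕ) : ℝ≥0∞) ≤ (T.ncard * ballCard Γ R : ℕ) := by
        exact_mod_cast Set.ncard_le_ncard_mul_ncard hcover hTfin (hfin R)
    _ = (path '' T).encard * ballCard Γ R := by
        rw [hinj.encard_image, ← hTfin.cast_ncard_eq]; push_cast; rfl
    _ ≤ sepCard (id : Γ → Γ) n R k 1 * ballCard Γ R := by
        gcongr
        exact encard_le_sepCard (by rintro _ ⟨g, hg, rfl⟩; exact hpath g hg) hsep

theorem ofReal_mul_le_limsup_elog_sepCard (hfin : ∀ r : ℝ, (closedBall (1 : Γ) r).Finite)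
    (hsplit : ∀ (g : Γ) (a b : ℕ), dist 1 g ≤ a + b → ∃ x, dist 1 x ≤ a ∧ dist x g ≤ b)
    {c : ℝ} (hc : Tendsto (fun n : ℕ => Real.log (ballCard Γ n) / n) atTop (𝓝 c))
    {k : ℕ} (hk : 0 < k) {R : ℝ} (hR : 0 < R) :
    ENNReal.ofReal (k * c) ≤
      atTop.limsup fun n : ℕ => elog (sepCard (id : Γ → Γ) n R k 1) / n := by
  have hpos (r : ℝ) (hr : 0 ≤ r) : (0 : ℝ) < ballCard Γ r := by
    exact_mod_cast ballCard_pos (hfin r) hr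
  set u : ℕ → ℝ := fun n => (Real.log (ballCard Γ (n * k : ℕ)) - Real.log (ballCard Γ R)) / n
  have hu : Tendsto u atTop (𝓝 (k * c)) := by
    have hnk : Tendsto (fun n : ℕ => n * k) atTop atTop :=
      tendsto_atTop_mono (fun n => Nat.le_mul_of_pos_right n hk) tendsto_id
    have h := ((hc.comp hnk).const_mul (k : ℝ)).sub
      (tendsto_const_div_atTop_nhds_zero_nat (Real.log (ballCard Γ R)))
    rw [sub_zero] at h
    refine h.congr' ?_
    filter_upwards [eventually_ne_atTop 0] with n hn
    simp only [Function.comp_apply, u]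
    field_simp
    push_cast
    ring
  have hle : ∀ᶠ n : ℕ in atTop,
      ENNReal.ofReal (u n) ≤ elog (sepCard (id : Γ → Γ) n R k 1) / n := by
    filter_upwards [eventually_ne_atTop 0] with n hn
    rw [ENNReal.ofReal_div_natCast hn, ← Real.log_div (hpos _ (by positivity)).ne'
      (hpos R hR.le).ne', ← elog_ofReal (div_pos (hpos _ (by positivity)) (hpos R hR.le)).le]
    gcongr
    refine elog_mono ?_
    rw [ENNReal.ofReal_div_of_pos (hpos R hR.le), ENNReal.ofReal_natCast, ENNReal.ofReal_natCast]
    exact ENNReal.div_le_of_le_mul (ballCard_le_sepCard_mul hfin hsplit k n hR)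
  calc ENNReal.ofReal (k * c) = atTop.limsup fun n => ENNReal.ofReal (u n) :=
        ((ENNReal.continuous_ofReal.tendsto _).comp hu).limsup_eq.symm
    _ ≤ _ := limsup_le_limsup hle

theorem coarseEntropyAt_eq_top (hfin : ∀ r : ℝ, (closedBall (1 : Γ) r).Finite)
    (hsplit : ∀ (g : Γ) (a b : ℕ), dist 1 g ≤ a + b → ∃ x, dist 1 x ≤ a ∧ dist x g ≤ b)
    {c : ℝ} (hc : Tendsto (fun n : ℕ => Real.log (ballCard Γ n) / n) atTop (𝓝 c))
    (hpos : 0 < c) : coarseEntropyAt (id : Γ → Γ) 1 = ⊤ := by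
  refine ENNReal.eq_top_of_forall_nnreal_le fun r => ?_
  obtain ⟨k, hk⟩ := exists_nat_gt (r / c)
  have hk₀ : 0 < k := by exact_mod_cast (div_nonneg r.2 hpos.le).trans_lt hk
  calc (r : ℝ≥0∞) = ENNReal.ofReal r := ENNReal.ofReal_coe_nnreal.symm
    _ ≤ ENNReal.ofReal (k * c) := ENNReal.ofReal_le_ofReal ((div_le_iff₀ hpos).mp hk.le)
    _ ≤ ⨅ (R : ℝ) (_ : 0 < R),
          atTop.limsup fun n : ℕ => elog (sepCard (id : Γ → Γ) n R k 1) / n :=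
        le_iInf₂ fun R hR => ofReal_mul_le_limsup_elog_sepCard hfin hsplit hc hk₀ hR
    _ ≤ coarseEntropyAt (id : Γ → Γ) 1 :=
        le_iSup₂_of_le (k : ℝ) (by exact_mod_cast hk₀) le_rfl

theorem sepCard_le_ballCard_pow (hfin : ∀ r : ℝ, (closedBall (1 : Γ) r).Finite)
    {δ R : ℝ} (hδ : 0 ≤ δ) {k : ℕ} (hk : 0 < k) (hR : 2 * (k * δ) < R) (n : ℕ) :
    sepCard (id : Γ → Γ) n R δ 1 ≤ (ballCard Γ (k * δ) : ℝ≥0∞) ^ (n / k) := by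
  refine iSup₂_le fun F hF => iSup_le fun hsep => ?_
  let incr : (ℕ → Γ) → Fin (n / k) → Γ := fun p j => (p (j * k))⁻¹ * p ((j + 1) * k)
  have hmaps : MapsTo incr F (Set.pi univ fun _ => closedBall 1 (k * δ)) := by
    intro p hp j _
    have hj : (j + 1) * k ≤ n := (Nat.le_div_iff_mul_le hk).mp j.2
    have := (hF p hp).dist_le_mul (a := j * k) (j := k) (by rwa [add_mul, one_mul] at hj)
    show (p (j * k))⁻¹ * p ((j + 1) * k) ∈ closedBall 1 (k * δ)
    rwa [mem_closedBall, dist_comm, dist_one_inv_mul, add_one_mul]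
  have hinj : InjOn incr F := by
    intro p hp q hq hpq
    by_contra hne
    have hsamples : ∀ j ≤ n / k, p (j * k) = q (j * k) := by
      intro j
      induction j with
      | zero => simp [(hF p hp).1, (hF q hq).1]
      | succ j ih =>
        intro hj
        calc p ((j + 1) * k) = p (j * k) * incr p ⟨j, hj⟩ := by simp [incr]
          _ = q (j * k) * incr q ⟨j, hj⟩ := by rw [ih (Nat.le_of_succ_le hj), congrFun hpq]
          _ = q ((j + 1) * k) := by simp [incr]
    exact not_le.mpr hR ((hsep p hp q hq hne).trans
      ((hF p hp).orbitDist_le_of_eq_mul (hF q hq) hδ hk hsamples))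
  calc (F.encard : ℝ≥0∞) = (incr '' F).encard := by rw [hinj.encard_image]
    _ ≤ (Set.pi univ fun _ : Fin (n / k) => closedBall (1 : Γ) (k * δ)).encard := by
        gcongr; exact hmaps.image_subset
    _ = (ballCard Γ (k * δ) : ℝ≥0∞) ^ (n / k) := by
        rw [Set.encard_pi_eq_prod_encard, encard_closedBall_one (hfin _)]; simp

theorem limsup_elog_sepCard_le (hfin : ∀ r : ℝ, (closedBall (1 : Γ) r).Finite)
    {δ R : ℝ} (hδ : 0 ≤ δ) {k : ℕ} (hk : 0 < k) (hR : 2 * (k * δ) < R) :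
    atTop.limsup (fun n : ℕ => elog (sepCard (id : Γ → Γ) n R δ 1) / n) ≤
      ENNReal.ofReal (Real.log (ballCard Γ (k * δ)) / k) := by
  refine limsup_le_of_le (by isBoundedDefault) ?_
  filter_upwards [eventually_ne_atTop 0] with n hn
  have hlog : 0 ≤ Real.log (ballCard Γ (k * δ)) :=
    Real.log_nonneg (by exact_mod_cast ballCard_pos (hfin _) (by positivity))
  calc elog (sepCard (id : Γ → Γ) n R δ 1) / n
      ≤ elog (ENNReal.ofReal ((ballCard Γ (k * δ) : ℝ) ^ (n / k))) / n := by
        gcongr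
        refine elog_mono ((sepCard_le_ballCard_pow hfin hδ hk hR n).trans_eq ?_)
        rw [ENNReal.ofReal_pow (by positivity), ENNReal.ofReal_natCast]
    _ = ENNReal.ofReal ((n / k : ℕ) * Real.log (ballCard Γ (k * δ)) / n) := by
        rw [elog_ofReal (by positivity), Real.log_pow, ENNReal.ofReal_div_natCast hn]
    _ ≤ ENNReal.ofReal (Real.log (ballCard Γ (k * δ)) / k) := by
        refine ENNReal.ofReal_le_ofReal ?_
        calc ((n / k : ℕ) : ℝ) * Real.log (ballCard Γ (k * δ)) / n
            ≤ (n / k : ℝ) * Real.log (ballCard Γ (k * δ)) / n := by gcongr; exact Nat.cast_div_le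
          _ = Real.log (ballCard Γ (k * δ)) / k := by field_simp

theorem coarseEntropyAt_eq_zero (hfin : ∀ r : ℝ, (closedBall (1 : Γ) r).Finite)
    (hc : Tendsto (fun n : ℕ => Real.log (ballCard Γ n) / n) atTop (𝓝 0)) :
    coarseEntropyAt (id : Γ → Γ) 1 = 0 := by
  refine le_antisymm (iSup₂_le fun δ hδ => ?_) bot_le
  set d := ⌈δ⌉₊
  have hd : 0 < d := Nat.ceil_pos.mpr hδ
  have hlim : Tendsto (fun k : ℕ => ENNReal.ofReal (Real.log (ballCard Γ (k * d)) / k))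
      atTop (𝓝 0) := by
    have hkd : Tendsto (fun k : ℕ => k * d) atTop atTop :=
      tendsto_atTop_mono (fun k => Nat.le_mul_of_pos_right k hd) tendsto_id
    have h := (ENNReal.continuous_ofReal.tendsto _).comp ((hc.comp hkd).const_mul (d : ℝ))
    rw [mul_zero, ENNReal.ofReal_zero] at h
    refine h.congr' ?_
    filter_upwards [eventually_ne_atTop 0] with k hk
    simp only [Function.comp_apply]
    congr 1
    push_cast
    field_simp
  refine ge_of_tendsto hlim (Eventually.mono (eventually_gt_atTop 0) fun k hk => ?_)
  calc ⨅ (R : ℝ) (_ : 0 < R), atTop.limsup (fun n : ℕ => elog (sepCard id n R δ 1) / n)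
      ≤ atTop.limsup (fun n : ℕ => elog (sepCard (id : Γ → Γ) n (2 * (k * d) + 1) δ 1) / n) :=
        iInf₂_le _ (by positivity)
    _ ≤ atTop.limsup (fun n : ℕ => elog (sepCard (id : Γ → Γ) n (2 * (k * d) + 1) d 1) / n) :=
        limsup_le_limsup (Eventually.of_forall fun n =>
          ENNReal.div_le_div_right (elog_mono (sepCard_mono (Nat.le_ceil δ))) _)
    _ ≤ ENNReal.ofReal (Real.log (ballCard Γ (k * d)) / k) :=
        limsup_elog_sepCard_le hfin d.cast_nonneg hk (lt_add_one _)

end InvariantMetric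

section WordMetric

variable {Γ : Type*} [Group Γ] {S : Set Γ}

theorem wordDist_le_length {g h : Γ} {l : List Γ} (hl : ∀ x ∈ l, x ∈ S ∨ x⁻¹ ∈ S)
    (hprod : g⁻¹ * h = l.prod) : wordDist S g h ≤ l.length :=
  Nat.sInf_le ⟨l, rfl, hl, hprod⟩

theorem wordDist_mul_left (a g h : Γ) : wordDist S (a * g) (a * h) = wordDist S g h := by
  simp only [wordDist, mul_inv_rev, mul_assoc, inv_mul_cancel_left]

variable [MetricSpace Γ]

theorem dist_le_length_of_wordDist (hdist : ∀ g h : Γ, dist g h = wordDist S g h) {g h : Γ}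
    {l : List Γ} (hl : ∀ x ∈ l, x ∈ S ∨ x⁻¹ ∈ S) (hprod : g⁻¹ * h = l.prod) :
    dist g h ≤ l.length := by
  rw [hdist]
  exact_mod_cast wordDist_le_length hl hprod

/-- Since `dist` separates points, a word metric can only be given by a generating set:
otherwise `wordDist` would take the junk value `sInf ∅ = 0`. -/
theorem exists_word_of_wordDist (hdist : ∀ g h : Γ, dist g h = wordDist S g h) (g : Γ) :
    ∃ l : List Γ, (l.length : ℝ) = dist 1 g ∧ (∀ x ∈ l, x ∈ S ∨ x⁻¹ ∈ S) ∧ l.prod = g := by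
  have hne : {n : ℕ | ∃ l : List Γ, l.length = n ∧ (∀ x ∈ l, x ∈ S ∨ x⁻¹ ∈ S) ∧
      1⁻¹ * g = l.prod}.Nonempty := by
    by_contra hempty
    have h₀ : dist 1 g = 0 := by
      rw [hdist, wordDist, Set.not_nonempty_iff_eq_empty.mp hempty, Nat.sInf_empty, Nat.cast_zero]
    exact hempty ⟨0, [], rfl, by simp, by simp [← dist_eq_zero.mp h₀]⟩
  obtain ⟨l, hlen, hl, hprod⟩ := Nat.sInf_mem hne
  exact ⟨l, by rw [hdist, wordDist, hlen], hl, by simpa using hprod.symm⟩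

theorem isIsometricSMul_of_wordDist (hdist : ∀ g h : Γ, dist g h = wordDist S g h) :
    IsIsometricSMul Γ Γ :=
  ⟨fun a => Isometry.of_dist_eq fun g h => by simp only [smul_eq_mul, hdist, wordDist_mul_left]⟩

theorem exists_dist_le_of_wordDist (hdist : ∀ g h : Γ, dist g h = wordDist S g h) (g : Γ)
    (a b : ℕ) (hg : dist 1 g ≤ a + b) : ∃ x, dist 1 x ≤ a ∧ dist x g ≤ b := by
  obtain ⟨l, hlen, hl, rfl⟩ := exists_word_of_wordDist hdist g
  have hlab : l.length ≤ a + b := by exact_mod_cast hlen ▸ hg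
  refine ⟨(l.take a).prod, ?_, ?_⟩
  · calc dist 1 (l.take a).prod ≤ (l.take a).length :=
          dist_le_length_of_wordDist hdist (fun x hx => hl x (List.mem_of_mem_take hx))
            (by rw [inv_one, one_mul])
      _ ≤ a := by exact_mod_cast List.length_take_le a l
  · calc dist (l.take a).prod l.prod ≤ (l.drop a).length :=
          dist_le_length_of_wordDist hdist (fun x hx => hl x (List.mem_of_mem_drop hx))
            (by rw [← List.prod_take_mul_prod_drop l a, inv_mul_cancel_left])
      _ ≤ b := by rw [List.length_drop]; exact_mod_cast (by omega : l.length - a ≤ b)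

theorem closedBall_one_one_subset_of_wordDist (hdist : ∀ g h : Γ, dist g h = wordDist S g h) :
    closedBall (1 : Γ) 1 ⊆ insert 1 (S ∪ S⁻¹) := by
  intro g hg
  obtain ⟨l, hlen, hl, rfl⟩ := exists_word_of_wordDist hdist g
  have hl₁ : l.length ≤ 1 := by exact_mod_cast hlen ▸ mem_closedBall'.mp hg
  match l, hl₁ with
  | [], _ => exact mem_insert _ _
  | [x], _ => exact Or.inr (by simpa using hl x (by simp))

theorem finite_closedBall_one_of_wordDist (hdist : ∀ g h : Γ, dist g h = wordDist S g h)
    (hS : S.Finite) (r : ℝ) : (closedBall (1 : Γ) r).Finite :=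
  have := isIsometricSMul_of_wordDist hdist
  finite_closedBall_one_of_split
    (((hS.union hS.inv).insert 1).subset (closedBall_one_one_subset_of_wordDist hdist))
    (exists_dist_le_of_wordDist hdist) r

end WordMetric

theorem exponentialGrowth_iff_coarseEntropy_top_general {Γ : Type*} [Group Γ] [MetricSpace Γ]
    (S : Finset Γ)
    (hdist : ∀ g h : Γ, dist g h = (wordDist (S : Set Γ) g h : ℝ)) :
    (0 < Filter.atTop.limsup
        fun l : ℕ => elog ((Metric.closedBall (1 : Γ) (l : ℝ)).encard : ℝ≥0∞)
          / (l : ℝ≥0∞)) ↔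
      coarseEntropyAt (id : Γ → Γ) 1 = ⊤ := by
  have := isIsometricSMul_of_wordDist hdist
  have hfin := finite_closedBall_one_of_wordDist hdist S.finite_toSet
  have hsplit := exists_dist_le_of_wordDist hdist
  obtain ⟨c, hc₀, hc⟩ := exists_tendsto_log_ballCard_div hfin hsplit
  rw [limsup_elog_encard_closedBall_div hfin hc, ENNReal.ofReal_pos]
  refine ⟨coarseEntropyAt_eq_top hfin hsplit hc, fun htop => hc₀.lt_of_ne ?_⟩
  rintro rfl
  exact ENNReal.top_ne_zero (htop.symm.trans (coarseEntropyAt_eq_zero hfin hc))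

/-- A group `Γ` generated by a finite set `S`, equipped with the word
metric associated with `S`, has exponential growth (i.e.
`limsup_{l→∞} (1/l) log |B(e,l)| > 0`) if and only if its coarse entropy is infinite. -/
theorem exponentialGrowth_iff_coarseEntropy_top {Γ : Type*} [Group Γ] [MetricSpace Γ]
    (S : Finset Γ) (hgen : Subgroup.closure (S : Set Γ) = ⊤)
    (hdist : ∀ g h : Γ, dist g h = (wordDist (S : Set Γ) g h : ℝ)) :
    (0 < Filter.atTop.limsup
        fun l : ℕ => elog ((Metric.closedBall (1 : Γ) (l : ℝ)).encard : ℝ≥0∞)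
          / (l : ℝ≥0∞)) ↔
      coarseEntropyAt (id : Γ → Γ) 1 = ⊤ :=
  exponentialGrowth_iff_coarseEntropy_top_general S hdist
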